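/- Let A ∈ ℝ^{n×m} with m ≤ n. Then there exist matrices P₁, …, P_m ∈ ℝ^{n×n} such that for each k ∈ {1, …, m}, P_k is either the identity Iₙ or a Householder reflector Iₙ − 2·u_k·u_kᵀ for some unit vector u_k ∈ ℝⁿ with u_k(i) = 0 for all i < k, and the matrix P_m · P_{m−1} ⋯ P₁ · A is upper triangular, i.e. (P_m ⋯ P₁ A)(i,j) = 0 whenever i > j. -/

import Mathlib

open scoped Matrix

open Finset

lemma householder_step {n : ℕ} (k : Fin n) (x : Fin n → ℝ) :
    ∃ Q : Matrix (Fin n) (Fin n) ℝ,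
      (Q = 1 ∨ ∃ u : EuclideanSpace ℝ (Fin n), ‖u‖ = 1 ∧
        (∀ i : Fin n, (i : ℕ) < (k : ℕ) → u i = 0) ∧
        Q = 1 - (2 : ℝ) • Matrix.vecMulVec u u) ∧
      (∀ i : Fin n, (k : ℕ) < (i : ℕ) → (Q *ᵥ x) i = 0) ∧
      (∀ y : Fin n → ℝ, (∀ i : Fin n, (k : ℕ) ≤ (i : ℕ) → y i = 0) → Q *ᵥ y = y) := by
  by_cases hc : ∀ i : Fin n, (k : ℕ) < (i : ℕ) → x i = 0
  · exact ⟨1, Or.inl rfl, by simpa [Matrix.one_mulVec] using hc,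
      fun y _ => by simp [Matrix.one_mulVec]⟩
  · push_neg at hc
    obtain ⟨i0, hi0, hx0⟩ := hc
    set y : Fin n → ℝ := fun i => if (k : ℕ) ≤ (i : ℕ) then x i else 0 with hy
    have hyk : y k = x k := by simp [hy]
    have hyi0 : y i0 = x i0 := by simp only [hy]; rw [if_pos (le_of_lt hi0)]
    have hylt : ∀ i : Fin n, (i : ℕ) < (k : ℕ) → y i = 0 := by
      intro i hi; simp only [hy]; rw [if_neg (by omega)]
    set S : ℝ := ∑ i, y i ^ 2 with hS
    have hSpos : 0 < S := by
      apply Finset.sum_pos' (fun i _ => sq_nonneg _)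
      refine ⟨i0, Finset.mem_univ _, ?_⟩
      have h0 : y i0 ≠ 0 := hyi0 ▸ hx0
      positivity
    set α : ℝ := Real.sqrt S with hαdef
    have hα : 0 < α := Real.sqrt_pos.mpr hSpos
    have hα2 : α ^ 2 = S := Real.sq_sqrt hSpos.le
    set s : ℝ := if x k < 0 then -1 else 1 with hsdef
    have hs2 : s * s = 1 := by by_cases h : x k < 0 <;> simp [hsdef, h]
    have hsxk : s * x k = |x k| := by
      by_cases h : x k < 0
      · simp [hsdef, h, abs_of_neg h]
      · simp [hsdef, h, abs_of_nonneg (not_lt.mp h)]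
    set v : Fin n → ℝ := fun i => y i + (if i = k then s * α else 0) with hv
    have hvne : ∀ i : Fin n, i ≠ k → v i = y i := by intro i hi; simp [hv, hi]
    have hvlt : ∀ i : Fin n, (i : ℕ) < (k : ℕ) → v i = 0 := by
      intro i hi
      have hik : i ≠ k := by intro h; subst h; omega
      simp [hv, hik, hylt i hi]
    set β : ℝ := α ^ 2 + α * |x k| with hβ
    have hβpos : 0 < β := by positivity
    have hvv : ∑ i, v i ^ 2 = 2 * β := by
      have : ∀ i : Fin n, v i ^ 2 = y i ^ 2 + (2 * s * α) * (if i = k then y i else 0)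
          + (if i = k then s ^ 2 * α ^ 2 else 0) := by
        intro i; by_cases h : i = k <;> simp [hv, h] <;> ring
      rw [Finset.sum_congr rfl fun i _ => this i]
      rw [Finset.sum_add_distrib, Finset.sum_add_distrib, ← Finset.mul_sum,
        Finset.sum_ite_eq' _ k, Finset.sum_ite_eq' _ k]
      simp only [Finset.mem_univ, if_true]
      have hs2' : s ^ 2 = 1 := by rw [sq]; exact hs2
      rw [hyk, hs2', hβ, hα2]
      nlinarith [hsxk, hα2]
    have hvx : ∑ i, v i * x i = β := by
      have : ∀ i : Fin n, v i * x i = y i ^ 2 + (if i = k then s * α * x k else 0) := by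
        intro i
        by_cases h : i = k
        · subst h; simp [hv, hyk]; ring
        · simp [hv, h]
          by_cases h2 : (k : ℕ) ≤ (i : ℕ) <;> simp [hy, h2] <;> ring
      rw [Finset.sum_congr rfl fun i _ => this i, Finset.sum_add_distrib,
        Finset.sum_ite_eq' _ k]
      simp only [Finset.mem_univ, if_true]
      rw [hβ, hα2]
      nlinarith [hsxk]
    set c : ℝ := Real.sqrt (2 * β) with hcdef
    have hc : 0 < c := Real.sqrt_pos.mpr (by positivity)
    have hc2 : c ^ 2 = 2 * β := Real.sq_sqrt (by positivity)
    set u : EuclideanSpace ℝ (Fin n) := WithLp.toLp 2 (fun i => v i / c) with hu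
    have hunorm : ‖u‖ = 1 := by
      rw [EuclideanSpace.norm_eq]
      have : ∑ i, ‖u i‖ ^ 2 = 1 := by
        have : ∀ i : Fin n, ‖u i‖ ^ 2 = v i ^ 2 / c ^ 2 := by
          intro i; rw [Real.norm_eq_abs, sq_abs, hu]; ring
        rw [Finset.sum_congr rfl fun i _ => this i, ← Finset.sum_div, hvv, hc2]
        field_simp
      rw [this, Real.sqrt_one]
    have hult : ∀ i : Fin n, (i : ℕ) < (k : ℕ) → u i = 0 := by
      intro i hi; rw [hu]; simp [hvlt i hi]
    set Q : Matrix (Fin n) (Fin n) ℝ := 1 - (2 : ℝ) • Matrix.vecMulVec u u with hQ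
    have hQapp : ∀ (z : Fin n → ℝ) (i : Fin n),
        (Q *ᵥ z) i = z i - 2 * u i * (∑ j, u j * z j) := by
      intro z i
      rw [hQ, Matrix.sub_mulVec, Matrix.one_mulVec]
      simp only [Pi.sub_apply]
      have h1 : (Matrix.vecMulVec u u *ᵥ z) i = u i * ∑ j, u j * z j := by
        rw [Matrix.mulVec, dotProduct, Finset.mul_sum]
        refine Finset.sum_congr rfl fun j _ => ?_
        rw [Matrix.vecMulVec_apply]; ring
      rw [Matrix.smul_mulVec]
      simp only [Pi.smul_apply, smul_eq_mul]
      rw [h1]; ring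
    refine ⟨Q, Or.inr ⟨u, hunorm, hult, hQ⟩, ?_, ?_⟩
    · intro i hi
      rw [hQapp]
      have hux : ∑ j, u j * x j = β / c := by
        have : ∀ j : Fin n, u j * x j = v j * x j / c := by intro j; rw [hu]; ring
        rw [Finset.sum_congr rfl fun j _ => this j, ← Finset.sum_div, hvx]
      rw [hux]
      have hik : i ≠ k := by intro h; subst h; omega
      have hvi : v i = y i := hvne i hik
      have hyi : y i = x i := by simp only [hy]; rw [if_pos (le_of_lt hi)]
      have hui : u i = x i / c := by rw [hu]; simp only; rw [hvi, hyi]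
      rw [hui]
      have hcc : c * c = 2 * β := by rw [← sq]; exact hc2
      field_simp
      linear_combination x i * hcc
    · intro z hz
      funext i
      rw [hQapp]
      have : ∑ j, u j * z j = 0 := by
        apply Finset.sum_eq_zero
        intro j _
        by_cases h : (j : ℕ) < (k : ℕ)
        · rw [hult j h]; ring
        · rw [hz j (not_lt.mp h)]; ring
      rw [this]; ring

noncomputable def pprodAux {n m : ℕ} (P : Fin m → Matrix (Fin n) (Fin n) ℝ) (t : ℕ) :
    Matrix (Fin n) (Fin n) ℝ :=
  (((List.ofFn P).take t).reverse).prod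

lemma pprodAux_full {n m : ℕ} (P : Fin m → Matrix (Fin n) (Fin n) ℝ) :
    pprodAux P m = (List.ofFn P).reverse.prod := by
  rw [pprodAux, List.take_of_length_le (by simp)]

lemma pprodAux_succ {n m : ℕ} (P : Fin m → Matrix (Fin n) (Fin n) ℝ) {t : ℕ} (ht : t < m) :
    pprodAux P (t + 1) = P ⟨t, ht⟩ * pprodAux P t := by
  rw [pprodAux, pprodAux, List.take_succ]
  have : (List.ofFn P)[t]? = some (P ⟨t, ht⟩) := by
    rw [List.getElem?_eq_getElem (by simpa using ht)]
    congr 1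
    simp
  rw [this]
  simp

lemma pprodAux_congr {n m : ℕ} {P P' : Fin m → Matrix (Fin n) (Fin n) ℝ} {t : ℕ}
    (h : ∀ j : Fin m, (j : ℕ) < t → P j = P' j) : pprodAux P t = pprodAux P' t := by
  unfold pprodAux
  have heq : (List.ofFn P).take t = (List.ofFn P').take t := by
    apply List.ext_getElem
    · simp
    · intro i h1 h2
      rw [List.getElem_take, List.getElem_take, List.getElem_ofFn, List.getElem_ofFn]
      have h1' : i < t ∧ i < m := by
        rw [List.length_take, List.length_ofFn] at h1; omega
      exact h ⟨i, h1'.2⟩ h1'.1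
  rw [heq]

lemma pprodAux_stable {n m : ℕ} {P : Fin m → Matrix (Fin n) (Fin n) ℝ} {t : ℕ}
    (htm : t ≤ m) (h : ∀ j : Fin m, t ≤ (j : ℕ) → P j = 1) : pprodAux P m = pprodAux P t := by
  have key : ∀ r, t ≤ r → r ≤ m → pprodAux P r = pprodAux P t := by
    intro r hr
    induction r, hr using Nat.le_induction with
    | base => intro _; rfl
    | succ r hr ih =>
      intro hrm
      rw [pprodAux_succ P (by omega), h ⟨r, by omega⟩ (by simpa using hr), one_mul,
        ih (by omega)]
  exact key m htm le_rfl


theorem stmt13 (n m : ℕ) (hmn : m ≤ n) (A : Matrix (Fin n) (Fin m) ℝ) :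
    ∃ P : Fin m → Matrix (Fin n) (Fin n) ℝ,
      (∀ k : Fin m, P k = 1 ∨ ∃ u : EuclideanSpace ℝ (Fin n), ‖u‖ = 1 ∧
        (∀ i : Fin n, (i : ℕ) < (k : ℕ) → u i = 0) ∧
        P k = 1 - (2 : ℝ) • Matrix.vecMulVec u u) ∧
      ∀ i : Fin n, ∀ j : Fin m, (j : ℕ) < (i : ℕ) →
        ((List.ofFn P).reverse.prod * A) i j = 0 := by
  have main : ∀ t : ℕ, t ≤ m → ∃ P : Fin m → Matrix (Fin n) (Fin n) ℝ,
      (∀ k : Fin m, P k = 1 ∨ ∃ u : EuclideanSpace ℝ (Fin n), ‖u‖ = 1 ∧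
        (∀ i : Fin n, (i : ℕ) < (k : ℕ) → u i = 0) ∧
        P k = 1 - (2 : ℝ) • Matrix.vecMulVec u u) ∧
      (∀ k : Fin m, t ≤ (k : ℕ) → P k = 1) ∧
      (∀ i : Fin n, ∀ j : Fin m, (j : ℕ) < t → (j : ℕ) < (i : ℕ) →
        ((List.ofFn P).reverse.prod * A) i j = 0) := by
    intro t
    induction t with
    | zero =>
      intro _
      exact ⟨fun _ => 1, fun k => Or.inl rfl, fun k _ => rfl, fun i j hj _ => absurd hj (by omega)⟩
    | succ t ih =>
      intro htm
      have htm' : t < m := htm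
      obtain ⟨P, hprop, hone, htri⟩ := ih (le_of_lt htm')
      set M0 := (List.ofFn P).reverse.prod with hM0
      set B := M0 * A with hB
      set tf : Fin m := ⟨t, htm'⟩ with htf
      set kn : Fin n := ⟨t, lt_of_lt_of_le htm' hmn⟩ with hkn
      have hknval : (kn : ℕ) = t := rfl
      have htfval : (tf : ℕ) = t := rfl
      obtain ⟨Q, hQprop, hQzero, hQfix⟩ := householder_step kn (fun i => B i tf)
      set P' := Function.update P tf Q with hP'
      have hP'eq : ∀ j : Fin m, (j : ℕ) < t → P' j = P j := by
        intro j hj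
        rw [hP', Function.update_of_ne (by intro h; subst h; simp [htfval] at hj)]
      have hP'one : ∀ k : Fin m, t + 1 ≤ (k : ℕ) → P' k = 1 := by
        intro k hk
        rw [hP', Function.update_of_ne (by intro h; subst h; simp [htfval] at hk)]
        exact hone k (by omega)
      have hprod : (List.ofFn P').reverse.prod = Q * M0 := by
        rw [← pprodAux_full, pprodAux_stable (by omega) hP'one,
          pprodAux_succ P' htm', hM0, ← pprodAux_full,
          pprodAux_stable (le_of_lt htm') hone,
          pprodAux_congr (fun j hj => (hP'eq j hj).symm)]
        congr 1
        rw [hP']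
        have : (⟨t, htm'⟩ : Fin m) = tf := rfl
        rw [this, Function.update_self]
      refine ⟨P', ?_, hP'one, ?_⟩
      · intro k
        by_cases hk : k = tf
        · subst hk
          rcases hQprop with h | ⟨u, h1, h2, h3⟩
          · left; rw [hP', Function.update_self]; exact h
          · right
            exact ⟨u, h1, fun i hi => h2 i hi, by rw [hP', Function.update_self]; exact h3⟩
        · rw [hP', Function.update_of_ne hk]
          exact hprop k
      · intro i j hj hij
        rw [hprod, Matrix.mul_assoc, ← hB]
        have hcol : (Q * B) i j = (Q *ᵥ fun l => B l j) i := by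
          rw [Matrix.mul_apply, Matrix.mulVec, dotProduct]
        rw [hcol]
        by_cases hjt : (j : ℕ) = t
        · have : j = tf := by rw [htf]; exact Fin.ext hjt
          subst this
          exact hQzero i (by omega)
        · have hjt' : (j : ℕ) < t := by omega
          have hfix := hQfix (fun l => B l j) ?_
          · rw [hfix]
            exact htri i j hjt' hij
          · intro l hl
            exact htri l j hjt' (by omega)
  obtain ⟨P, h1, _, h3⟩ := main m le_rfl
  exact ⟨P, h1, fun i j hj => h3 i j j.isLt hj⟩
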